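/- arXiv:2509.05569 — 6 statements merged into one kernel-verified Lean document; each statement's English description precedes it below -/
import Mathlib

section
/- Let n ≥ 1 and let U ⊆ ℂ^n be a nonempty connected open set. Let φ, f_1, …, f_r be functions U → ℂ that are analytic on U. Assume that for every tuple (c_1, …, c_r) ∈ ℚ^r the function φ − (c_1 f_1 + ⋯ + c_r f_r) is not identically zero on U. Then the set { s ∈ U : φ(s) lies in the ℚ-linear span of f_1(s), …, f_r(s) in ℂ } is meagre in U; in particular, there exists s ∈ U with φ(s) not in the ℚ-linear span of f_1(s), …, f_r(s). -/
/-!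
For each rational tuple `c`, the zero set of `φ - ∑ cᵢ fᵢ` is a closed subset of `U`; by the
identity theorem it has empty interior, since otherwise `φ - ∑ cᵢ fᵢ` would vanish on all of the
connected set `U`. The points where `φ` lies in the `ℚ`-span of the `fᵢ` are covered by these
countably many nowhere dense sets, and `U`, being open in `ℂⁿ`, is a Baire space.
-/

open Set Filter Topology

theorem AnalyticOnNhd.isNowhereDense_setOf_eq_zero {𝕜 E F : Type*} [NontriviallyNormedField 𝕜]
    [NormedAddCommGroup E] [NormedSpace 𝕜 E] [NormedAddCommGroup F] [NormedSpace 𝕜 F]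
    {f : E → F} {U : Set E} (hf : AnalyticOnNhd 𝕜 f U) (hUo : IsOpen U)
    (hU : IsPreconnected U) (hne : ∃ z ∈ U, f z ≠ 0) :
    IsNowhereDense {x : U | f x = 0} := by
  have hclosed : IsClosed {x : U | f x = 0} :=
    isClosed_eq (continuousOn_iff_continuous_domRestrict.1 hf.continuousOn) continuous_const
  rw [hclosed.isNowhereDense_iff, ← not_nonempty_iff_eq_empty]
  rintro ⟨x, hx⟩
  have hev : f =ᶠ[𝓝 (x : E)] 0 := by
    have himage := hUo.isOpenMap_subtype_val _ (isOpen_interior (s := {x : U | f x = 0}))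
    filter_upwards [himage.mem_nhds ⟨x, hx, rfl⟩]
    rintro _ ⟨y, hy, rfl⟩
    exact interior_subset (s := {x : U | f x = 0}) hy
  obtain ⟨z, hzU, hz⟩ := hne
  exact hz (hf.eqOn_zero_of_preconnected_of_eventuallyEq_zero hU x.2 hev hzU)

theorem isMeagre_setOf_mem_span_range {X K M ι : Type*} [TopologicalSpace X] [Semiring K]
    [Countable K] [AddCommMonoid M] [Module K M] [Fintype ι] (φ : X → M) (f : ι → X → M)
    (h : ∀ c : ι → K, IsNowhereDense {x | φ x = ∑ i, c i • f i x}) :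
    IsMeagre {x | φ x ∈ Submodule.span K (range fun i => f i x)} := by
  refine (isMeagre_iUnion fun c => (h c).isMeagre).mono fun x hx => ?_
  obtain ⟨c, hc⟩ := Submodule.mem_span_range_iff_exists_fun K |>.1 hx
  exact mem_iUnion.2 ⟨c, hc.symm⟩

theorem stmt0_general (n r : ℕ) (U : Set (Fin n → ℂ))
    (hUopen : IsOpen U) (hUconn : IsConnected U)
    (φ : (Fin n → ℂ) → ℂ) (f : Fin r → (Fin n → ℂ) → ℂ)
    (hφ : AnalyticOnNhd ℂ φ U) (hf : ∀ i, AnalyticOnNhd ℂ (f i) U)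
    (h : ∀ c : Fin r → ℚ, ∃ s ∈ U, φ s - ∑ i, (c i : ℂ) * f i s ≠ 0) :
    IsMeagre {s : U | φ (s : Fin n → ℂ) ∈
        Submodule.span ℚ (Set.range fun i => f i (s : Fin n → ℂ))} ∧
      ∃ s ∈ U, φ s ∉ Submodule.span ℚ (Set.range fun i => f i s) := by
  have hzero (c : Fin r → ℚ) : IsNowhereDense {s : U | φ s = ∑ i, c i • f i s} := by
    have hg : AnalyticOnNhd ℂ (fun s => φ s - ∑ i, (c i : ℂ) * f i s) U :=
      hφ.sub (Finset.analyticOnNhd_fun_sum _ fun i _ => analyticOnNhd_const.mul (hf i))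
    simpa only [sub_eq_zero, Rat.smul_def] using
      hg.isNowhereDense_setOf_eq_zero hUopen hUconn.isPreconnected (h c)
  have hmeagre := isMeagre_setOf_mem_span_range (fun s : U => φ s) (fun i s => f i s) hzero
  refine ⟨hmeagre, ?_⟩
  have : LocallyCompactSpace U := hUopen.locallyCompactSpace
  have : Nonempty U := hUconn.nonempty.to_subtype
  obtain ⟨s, hs⟩ := (dense_of_mem_residual hmeagre).nonempty
  exact ⟨s, s.2, hs⟩

/-- For a nonempty connected open set `U ⊆ ℂⁿ` and functions
`φ, f₁, …, f_r` analytic on `U`, if for every rational tuple `(c₁, …, c_r)` the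
function `φ - ∑ cᵢ fᵢ` is not identically zero on `U`, then the set of points
`s ∈ U` where `φ s` lies in the `ℚ`-linear span of `f₁ s, …, f_r s` is meagre
in `U` (with its subspace topology); in particular some `s ∈ U` has `φ s`
outside that span. -/
theorem stmt0 (n r : ℕ) (hn : 1 ≤ n) (U : Set (Fin n → ℂ))
    (hUopen : IsOpen U) (hUconn : IsConnected U)
    (φ : (Fin n → ℂ) → ℂ) (f : Fin r → (Fin n → ℂ) → ℂ)
    (hφ : AnalyticOnNhd ℂ φ U) (hf : ∀ i, AnalyticOnNhd ℂ (f i) U)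
    (h : ∀ c : Fin r → ℚ, ∃ s ∈ U, φ s - ∑ i, (c i : ℂ) * f i s ≠ 0) :
    IsMeagre {s : U | φ (s : Fin n → ℂ) ∈
        Submodule.span ℚ (Set.range fun i => f i (s : Fin n → ℂ))} ∧
      ∃ s ∈ U, φ s ∉ Submodule.span ℚ (Set.range fun i => f i s) :=
  stmt0_general n r U hUopen hUconn φ f hφ hf h
end

section
/- Let α be a real number with 0 < α < 1. For λ, x ∈ (0,1) define F(λ, x) = x^{−α}(1−x)^{−α}(1−λx)^{−α} and H(λ, x) = −α · x^{1−α}(1−x)^{1−α}(1−λx)^{−1−α}, where all powers are real powers of positive real numbers. Then for all λ, x ∈ (0,1): λ(1−λ)·(∂²F/∂λ²)(λ,x) + 2(1−α−λ)·(∂F/∂λ)(λ,x) − α(1−α)·F(λ,x) = (∂H/∂x)(λ,x). -/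
open Real

/-- The integrand `F(λ, x) = x^(−α) (1−x)^(−α) (1−λx)^(−α)` (real powers). -/
noncomputable def Fint (α l x : ℝ) : ℝ :=
  x ^ (-α) * (1 - x) ^ (-α) * (1 - l * x) ^ (-α)

/-- The primitive `H(λ, x) = −α · x^(1−α) (1−x)^(1−α) (1−λx)^(−1−α)` (real powers). -/
noncomputable def Hint (α l x : ℝ) : ℝ :=
  -α * (x ^ (1 - α) * (1 - x) ^ (1 - α) * (1 - l * x) ^ (-1 - α))

/-! Every term of the identity is a polynomial in `λ, x, α` times `Pint α λ x`, so after the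
derivatives are computed and their exponents shifted to those of `Pint`, the identity reduces
to a polynomial identity. -/

noncomputable def Pint (α l x : ℝ) : ℝ :=
  x ^ (-α) * (1 - x) ^ (-α) * (1 - l * x) ^ (-α - 2)

lemma hasDerivAt_one_sub_mul_rpow {c t : ℝ} (p : ℝ) (h : 0 < 1 - t * c) :
    HasDerivAt (fun s : ℝ => (1 - s * c) ^ p) (-c * p * (1 - t * c) ^ (p - 1)) t := by
  have hlin : HasDerivAt (fun s : ℝ => 1 - s * c) (-c) t := by
    simpa using ((hasDerivAt_id t).mul_const c).const_sub 1
  exact hlin.rpow_const (Or.inl h.ne')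

lemma Fint_eq_Pint {α l x : ℝ} (h : 0 < 1 - l * x) :
    Fint α l x = (1 - l * x) ^ 2 * Pint α l x := by
  have hshift : (1 - l * x) ^ (-α) = (1 - l * x) ^ (-α - 2) * (1 - l * x) ^ 2 := by
    rw [← rpow_natCast, ← rpow_add h]
    norm_num
  rw [Fint, Pint, hshift]
  ring

lemma hasDerivAt_Fint_left (α x : ℝ) {l : ℝ} (h : 0 < 1 - l * x) :
    HasDerivAt (fun t : ℝ => Fint α t x)
      (α * x * x ^ (-α) * (1 - x) ^ (-α) * (1 - l * x) ^ (-α - 1)) l := by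
  refine ((hasDerivAt_one_sub_mul_rpow (-α) h).const_mul
    (x ^ (-α) * (1 - x) ^ (-α))).congr_deriv ?_
  ring

lemma deriv_Fint_left {α l x : ℝ} (h : 0 < 1 - l * x) :
    deriv (fun t : ℝ => Fint α t x) l = α * x * (1 - l * x) * Pint α l x := by
  rw [(hasDerivAt_Fint_left α x h).deriv, Pint,
    show -α - 1 = (-α - 2) + 1 by ring, rpow_add_one h.ne']
  ring

lemma deriv_deriv_Fint_left {α l x : ℝ} (h : 0 < 1 - l * x) :
    deriv (deriv (fun t : ℝ => Fint α t x)) l = α * (α + 1) * x ^ 2 * Pint α l x := by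
  have hnear : ∀ᶠ t in nhds l, 0 < 1 - t * x :=
    (isOpen_lt continuous_const (by fun_prop)).mem_nhds h
  have hderiv : deriv (fun t : ℝ => Fint α t x) =ᶠ[nhds l]
      fun t => α * x * x ^ (-α) * (1 - x) ^ (-α) * (1 - t * x) ^ (-α - 1) := by
    filter_upwards [hnear] with t ht using (hasDerivAt_Fint_left α x ht).deriv
  rw [hderiv.deriv_eq, ((hasDerivAt_one_sub_mul_rpow (-α - 1) h).const_mul _).deriv, Pint,
    show -α - 1 - 1 = -α - 2 by ring]
  ring

lemma hasDerivAt_Hint_right (α : ℝ) {l x : ℝ} (hx : x ∈ Set.Ioo (0 : ℝ) 1)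
    (h : 0 < 1 - l * x) :
    HasDerivAt (Hint α l)
      (-α * ((1 - α) * (1 - 2 * x) * (1 - l * x) + (1 + α) * l * x * (1 - x)) * Pint α l x) x := by
  obtain ⟨hx0, hx1⟩ := hx
  have hx1' : 0 < 1 - x := by linarith
  have h1 : HasDerivAt (fun u : ℝ => u ^ (1 - α)) (1 * (1 - α) * x ^ (1 - α - 1)) x :=
    (hasDerivAt_id x).rpow_const (Or.inl hx0.ne')
  have h2 : HasDerivAt (fun u : ℝ => (1 - u) ^ (1 - α))
      (-1 * (1 - α) * (1 - x) ^ (1 - α - 1)) x :=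
    ((hasDerivAt_id x).const_sub 1).rpow_const (Or.inl hx1'.ne')
  have h3 : HasDerivAt (fun u : ℝ => (1 - l * u) ^ (-1 - α))
      (-l * (-1 - α) * (1 - l * x) ^ (-1 - α - 1)) x := by
    simpa only [mul_comm l] using hasDerivAt_one_sub_mul_rpow (-1 - α) (mul_comm l x ▸ h)
  refine (((h1.mul h2).mul h3).const_mul (-α)).congr_deriv ?_
  have hx_shift : x ^ (1 - α) = x ^ (-α) * x := by
    rw [← rpow_add_one hx0.ne']; ring_nf
  have hy_shift : (1 - x) ^ (1 - α) = (1 - x) ^ (-α) * (1 - x) := by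
    rw [← rpow_add_one hx1'.ne']; ring_nf
  have hz_shift : (1 - l * x) ^ (-1 - α) = (1 - l * x) ^ (-α - 2) * (1 - l * x) := by
    rw [← rpow_add_one h.ne']; ring_nf
  simp only [Pi.mul_apply, Pint, show 1 - α - 1 = -α by ring, show -1 - α - 1 = -α - 2 by ring,
    hx_shift, hy_shift, hz_shift]
  ring

theorem stmt2_general (α : ℝ)
    (l x : ℝ) (hl : l ∈ Set.Ioo (0 : ℝ) 1) (hx : x ∈ Set.Ioo (0 : ℝ) 1) :
    l * (1 - l) * deriv (deriv (fun t : ℝ => Fint α t x)) l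
      + 2 * (1 - α - l) * deriv (fun t : ℝ => Fint α t x) l
      - α * (1 - α) * Fint α l x
      = deriv (fun u : ℝ => Hint α l u) x := by
  have h : 0 < 1 - l * x := by nlinarith [hl.1, hl.2, hx.1, hx.2]
  rw [deriv_deriv_Fint_left h, deriv_Fint_left h, Fint_eq_Pint h,
    (hasDerivAt_Hint_right α hx h).deriv]
  ring

/-- For `0 < α < 1` and `λ, x ∈ (0,1)`, the hypergeometric-type
operator `λ(1−λ)∂²_λ + 2(1−α−λ)∂_λ − α(1−α)` applied to `F(·, x)` equals the
derivative in `x` of `H(λ, ·)`. -/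
theorem stmt2 (α : ℝ) (hα0 : 0 < α) (hα1 : α < 1)
    (l x : ℝ) (hl : l ∈ Set.Ioo (0 : ℝ) 1) (hx : x ∈ Set.Ioo (0 : ℝ) 1) :
    l * (1 - l) * deriv (deriv (fun t : ℝ => Fint α t x)) l
      + 2 * (1 - α - l) * deriv (fun t : ℝ => Fint α t x) l
      - α * (1 - α) * Fint α l x
      = deriv (fun u : ℝ => Hint α l u) x :=
  stmt2_general α l x hl hx
end

section
/- Let α be a real number with 0 < α < 1. For (λ₁, λ₂) ∈ (0,1)² define I(λ₁, λ₂) = ∫_0^1 ( ∫_0^x x^{−α}(1−x)^{−α}(1−λ₁x)^{−α} · y^{α−1}(1−y)^{α−1}(1−λ₂y)^{α−1} dy ) dx. Then for all (λ₁, λ₂) ∈ (0,1)² with λ₁ ≠ λ₂: λ₂(1−λ₂)·(∂²I/∂λ₂²)(λ₁,λ₂) + 2(α−λ₂)·(∂I/∂λ₂)(λ₁,λ₂) − α(1−α)·I(λ₁,λ₂) = (1/(λ₁−λ₂)) · ( ((1−λ₁)/(1−λ₂))^{1−α} − 1 ). -/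
open Real

/-!
Write `I(λ₁, t) = ∫₀¹ w(x) J₀(t, x) dx` with `w(x) = x^(-α)(1-x)^(-α)(1-λ₁x)^(-α)` and
`J_n(t, x) = ∫₀ˣ ∂ₜⁿ f(t, y) dy`, `f(t, y) = y^(α-1)(1-y)^(α-1)(1-ty)^(α-1)`. Both integrals may be
differentiated twice in `t`: inside, `∂ₜⁿ f` is dominated by a multiple of the Beta density
`y^(α-1)(1-y)^(α-1)`; outside, `∫₀ˣ y^(α-1)(1-y)^(α-1) dy = O(x^α)` absorbs the singular factor
`x^(-α)` of `w`, leaving the integrable majorant `(1-x)^(-α)(1-λ₁x)^(-α)`.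
The Picard–Fuchs operator applied to `f` is the exact `y`-derivative of
`(α-1) y^α (1-y)^α (1-ty)^(α-2)`, which vanishes at `y = 0`; so the operator maps `J₀(t, x)` to
this boundary term at `y = x`. Multiplied by `w` it becomes `(α-1)(1-λ₁x)^(-α)(1-tx)^(α-2)`, the
derivative of `((1-λ₁x)/(1-tx))^(1-α) / (λ₁-t)`.
-/

/-- The double integral
`I(λ₁, λ₂) = ∫₀¹ (∫₀ˣ x^(−α)(1−x)^(−α)(1−λ₁x)^(−α) · y^(α−1)(1−y)^(α−1)(1−λ₂y)^(α−1) dy) dx`. -/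
noncomputable def Idbl (α l₁ l₂ : ℝ) : ℝ :=
  ∫ x in (0 : ℝ)..1, ∫ y in (0 : ℝ)..x,
    x ^ (-α) * (1 - x) ^ (-α) * (1 - l₁ * x) ^ (-α) *
      (y ^ (α - 1) * (1 - y) ^ (α - 1) * (1 - l₂ * y) ^ (α - 1))

open MeasureTheory Set Filter Topology Interval intervalIntegral

namespace PeriodIntegral

noncomputable section

variable {α b l x y t : ℝ}

def betaDensity (α y : ℝ) : ℝ := y ^ (α - 1) * (1 - y) ^ (α - 1)

/-- `∂ⁿ/∂tⁿ` of the inner integrand `y^(α-1) (1-y)^(α-1) (1-ty)^(α-1)`: differentiating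
`(1-ty)^(α-1-n)` in `t` produces the factor `(n+1-α) y`, whence the rising factorial. -/
def kernel (α : ℝ) (n : ℕ) (t y : ℝ) : ℝ :=
  (ascPochhammer ℝ n).eval (1 - α) *
    (y ^ (α - 1 + n) * (1 - y) ^ (α - 1) * (1 - t * y) ^ (α - 1 - n))

def innerIntegral (α : ℝ) (n : ℕ) (t x : ℝ) : ℝ := ∫ y in (0 : ℝ)..x, kernel α n t y

def weight (α l x : ℝ) : ℝ := x ^ (-α) * (1 - x) ^ (-α) * (1 - l * x) ^ (-α)

def outerIntegral (α l : ℝ) (n : ℕ) (t : ℝ) : ℝ :=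
  ∫ x in (0 : ℝ)..1, weight α l x * innerIntegral α n t x

lemma Idbl_eq_outerIntegral (α l₁ t : ℝ) : Idbl α l₁ t = outerIntegral α l₁ 0 t := by
  refine integral_congr fun x _ => ?_
  simp only [innerIntegral, kernel, weight, ← intervalIntegral.integral_const_mul,
    ascPochhammer_zero, Polynomial.eval_one, CharP.cast_eq_zero, add_zero, sub_zero, one_mul]

lemma one_sub_mul_pos (hl : l < 1) (hx0 : 0 ≤ x) (hx1 : x ≤ 1) : 0 < 1 - l * x := by
  rcases hx0.eq_or_lt with rfl | hx
  · simp
  · nlinarith [mul_pos hx (sub_pos.2 hl)]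

lemma exists_Iic_mem_nhds (ht : t < 1) : ∃ b, 0 ≤ b ∧ b < 1 ∧ Iic b ∈ 𝓝 t :=
  ⟨max 0 ((1 + t) / 2), le_max_left _ _, max_lt one_pos (by linarith),
    Iic_mem_nhds (lt_max_of_lt_right (by linarith))⟩

lemma betaDensity_le (hα1 : α < 1) (hy0 : 0 ≤ y) (hy1 : y ≤ 1) :
    betaDensity α y ≤ 2 ^ (1 - α) * (y ^ (α - 1) + (1 - y) ^ (α - 1)) := by
  wlog hy : y ≤ 1 / 2 generalizing y
  · have h := this (y := 1 - y) (by linarith) (by linarith) (by linarith)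
    simp only [betaDensity, sub_sub_cancel] at h ⊢
    linarith [mul_comm (y ^ (α - 1)) ((1 - y) ^ (α - 1))]
  have hhalf : (1 - y) ^ (α - 1) ≤ 2 ^ (1 - α) :=
    calc (1 - y) ^ (α - 1) ≤ (2⁻¹ : ℝ) ^ (α - 1) :=
          rpow_le_rpow_of_nonpos (by norm_num) (by linarith) (by linarith)
      _ = 2 ^ (1 - α) := by rw [inv_rpow zero_le_two, ← rpow_neg zero_le_two, neg_sub]
  have := mul_le_mul_of_nonneg_left hhalf (rpow_nonneg hy0 (α - 1))
  have := rpow_nonneg (sub_nonneg.2 hy1) (α - 1)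
  have := rpow_nonneg zero_le_two (1 - α)
  rw [betaDensity]
  nlinarith

lemma intervalIntegrable_one_sub_rpow {r : ℝ} (hr : -1 < r) (a c : ℝ) :
    IntervalIntegrable (fun y => (1 - y) ^ r) volume a c := by
  simpa using (intervalIntegrable_rpow' hr (a := 1 - a) (b := 1 - c)).comp_sub_left 1

lemma intervalIntegrable_betaMajorant (hα0 : 0 < α) (a c : ℝ) :
    IntervalIntegrable (fun y => y ^ (α - 1) + (1 - y) ^ (α - 1)) volume a c :=
  (intervalIntegrable_rpow' (by linarith)).add (intervalIntegrable_one_sub_rpow (by linarith) a c)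

lemma intervalIntegrable_betaDensity (hα0 : 0 < α) (hα1 : α < 1) (hx0 : 0 ≤ x) (hx1 : x ≤ 1) :
    IntervalIntegrable (betaDensity α) volume 0 x := by
  refine ((intervalIntegrable_betaMajorant hα0 0 x).const_mul (2 ^ (1 - α))).mono_fun'
    (by unfold betaDensity; fun_prop) ?_
  filter_upwards [ae_restrict_mem measurableSet_uIoc] with y hy
  rw [uIoc_of_le hx0] at hy
  have h0 : 0 ≤ betaDensity α y :=
    mul_nonneg (rpow_nonneg hy.1.le _) (rpow_nonneg (by linarith [hy.2]) _)
  rw [Real.norm_of_nonneg h0]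
  exact betaDensity_le hα1 hy.1.le (hy.2.trans hx1)

lemma integral_betaDensity_le (hα0 : 0 < α) (hα1 : α < 1) (hx0 : 0 ≤ x) (hx1 : x ≤ 1) :
    ∫ y in (0 : ℝ)..x, betaDensity α y ≤ 2 ^ (2 - α) / α * x ^ α := by
  have hleft : ∫ y in (0 : ℝ)..x, y ^ (α - 1) = x ^ α / α := by
    rw [integral_rpow (Or.inl (by linarith)), sub_add_cancel, zero_rpow hα0.ne', sub_zero]
  have hright : ∫ y in (0 : ℝ)..x, (1 - y) ^ (α - 1) = (1 - (1 - x) ^ α) / α := by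
    rw [integral_comp_sub_left (fun y => y ^ (α - 1)), integral_rpow (Or.inl (by linarith)),
      sub_add_cancel, sub_zero, one_rpow]
  have hsubadd : 1 ≤ x ^ α + (1 - x) ^ α := by
    linarith [self_le_rpow_of_le_one hx0 hx1 hα1.le,
      self_le_rpow_of_le_one (sub_nonneg.2 hx1) (by linarith) hα1.le]
  have h2 : (2 : ℝ) ^ (2 - α) = 2 ^ (1 - α) * 2 := by
    rw [show (2 : ℝ) - α = 1 - α + 1 by ring, rpow_add_one two_ne_zero]
  calc ∫ y in (0 : ℝ)..x, betaDensity α y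
      ≤ ∫ y in (0 : ℝ)..x, 2 ^ (1 - α) * (y ^ (α - 1) + (1 - y) ^ (α - 1)) :=
        integral_mono_on hx0 (intervalIntegrable_betaDensity hα0 hα1 hx0 hx1)
          ((intervalIntegrable_betaMajorant hα0 0 x).const_mul _)
          fun y hy => betaDensity_le hα1 hy.1 (hy.2.trans hx1)
    _ = 2 ^ (1 - α) * ((x ^ α + (1 - (1 - x) ^ α)) / α) := by
        rw [intervalIntegral.integral_const_mul,
          integral_add (intervalIntegrable_rpow' (by linarith))
            (intervalIntegrable_one_sub_rpow (by linarith) _ _), hleft, hright, add_div]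
    _ ≤ 2 ^ (1 - α) * (2 * x ^ α / α) := by
        gcongr
        linarith
    _ = 2 ^ (2 - α) / α * x ^ α := by rw [h2]; ring

lemma measurable_kernel (α : ℝ) (n : ℕ) (t : ℝ) : Measurable (kernel α n t) := by
  unfold kernel; fun_prop

lemma abs_kernel_le (hα1 : α ≤ 1) (n : ℕ) {s : ℝ} (hsb : s ≤ b) (hb0 : 0 ≤ b) (hb1 : b < 1)
    (hy : y ∈ Ioc (0 : ℝ) 1) :
    |kernel α n s y| ≤
      |(ascPochhammer ℝ n).eval (1 - α)| * (1 - b) ^ (α - 1 - n) * betaDensity α y := by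
  obtain ⟨hy0, hy1⟩ := hy
  have hsy : 1 - b ≤ 1 - s * y := by nlinarith
  have hy_pow : y ^ (α - 1 + n) ≤ y ^ (α - 1) :=
    rpow_le_rpow_of_exponent_ge hy0 hy1 (by simp)
  have hsy_pow : (1 - s * y) ^ (α - 1 - n) ≤ (1 - b) ^ (α - 1 - n) :=
    rpow_le_rpow_of_nonpos (by linarith) hsy (by linarith [n.cast_nonneg (α := ℝ)])
  have h1y := rpow_nonneg (sub_nonneg.2 hy1) (α - 1)
  have hsy_nonneg := rpow_nonneg ((sub_nonneg.2 hb1.le).trans hsy) (α - 1 - n)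
  rw [kernel, abs_mul, abs_of_nonneg (mul_nonneg (mul_nonneg (rpow_nonneg hy0.le _) h1y)
    hsy_nonneg)]
  calc _ ≤ |(ascPochhammer ℝ n).eval (1 - α)| *
        (y ^ (α - 1) * (1 - y) ^ (α - 1) * (1 - b) ^ (α - 1 - n)) := by gcongr
    _ = _ := by rw [betaDensity]; ring

lemma intervalIntegrable_kernel (hα0 : 0 < α) (hα1 : α < 1) (n : ℕ) (ht : t < 1)
    (hx0 : 0 ≤ x) (hx1 : x ≤ 1) : IntervalIntegrable (kernel α n t) volume 0 x := by
  refine ((intervalIntegrable_betaDensity hα0 hα1 hx0 hx1).const_mul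
    (|(ascPochhammer ℝ n).eval (1 - α)| * (1 - max t 0) ^ (α - 1 - n))).mono_fun'
    (measurable_kernel α n t).aestronglyMeasurable ?_
  filter_upwards [ae_restrict_mem measurableSet_uIoc] with y hy
  rw [uIoc_of_le hx0] at hy
  exact abs_kernel_le hα1.le n (le_max_left t 0) (le_max_right t 0) (max_lt ht one_pos)
    ⟨hy.1, hy.2.trans hx1⟩

lemma hasDerivAt_kernel (n : ℕ) (hy : 0 < y) (hty : 0 < 1 - t * y) :
    HasDerivAt (fun s => kernel α n s y) (kernel α (n + 1) t y) t := by
  have h := ((((hasDerivAt_id t).mul_const y).const_sub 1).rpow_const (p := α - 1 - n)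
    (Or.inl hty.ne')).const_mul
    ((ascPochhammer ℝ n).eval (1 - α) * (y ^ (α - 1 + n) * (1 - y) ^ (α - 1)))
  have hfun : (fun s => kernel α n s y) = fun s => (ascPochhammer ℝ n).eval (1 - α) *
      (y ^ (α - 1 + n) * (1 - y) ^ (α - 1)) * (1 - id s * y) ^ (α - 1 - n) := by
    ext s
    simp only [kernel, id]
    ring
  rw [hfun]
  refine h.congr_deriv ?_
  rw [kernel, ascPochhammer_succ_eval, Nat.cast_succ, ← add_assoc, rpow_add_one hy.ne',
    show α - 1 - (n + 1 : ℝ) = α - 1 - n - 1 by ring]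
  simp only [id]
  ring

lemma exists_abs_innerIntegral_le (hα0 : 0 < α) (hα1 : α < 1) (n : ℕ) (hb0 : 0 ≤ b)
    (hb1 : b < 1) :
    ∃ C, ∀ s ≤ b, ∀ x ∈ Icc (0 : ℝ) 1, |innerIntegral α n s x| ≤ C * x ^ α := by
  set M := |(ascPochhammer ℝ n).eval (1 - α)| * (1 - b) ^ (α - 1 - n)
  have hM : 0 ≤ M := mul_nonneg (abs_nonneg _) (rpow_nonneg (by linarith) _)
  refine ⟨M * (2 ^ (2 - α) / α), fun s hs x ⟨hx0, hx1⟩ => ?_⟩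
  rw [innerIntegral, ← Real.norm_eq_abs]
  calc _ ≤ ∫ y in (0 : ℝ)..x, M * betaDensity α y :=
        norm_integral_le_of_norm_le hx0 (Eventually.of_forall fun y hy =>
          abs_kernel_le hα1.le n hs hb0 hb1 ⟨hy.1, hy.2.trans hx1⟩)
          ((intervalIntegrable_betaDensity hα0 hα1 hx0 hx1).const_mul M)
    _ ≤ M * (2 ^ (2 - α) / α * x ^ α) := by
        rw [intervalIntegral.integral_const_mul]
        exact mul_le_mul_of_nonneg_left (integral_betaDensity_le hα0 hα1 hx0 hx1) hM
    _ = M * (2 ^ (2 - α) / α) * x ^ α := by ring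

lemma hasDerivAt_innerIntegral (hα0 : 0 < α) (hα1 : α < 1) (n : ℕ) (ht : t < 1) (hx0 : 0 ≤ x)
    (hx1 : x ≤ 1) :
    HasDerivAt (fun s => innerIntegral α n s x) (innerIntegral α (n + 1) t x) t := by
  obtain ⟨b, hb0, hb1, hb⟩ := exists_Iic_mem_nhds ht
  refine (hasDerivAt_integral_of_dominated_loc_of_deriv_le hb
    (Eventually.of_forall fun s => (measurable_kernel α n s).aestronglyMeasurable)
    (intervalIntegrable_kernel hα0 hα1 n ht hx0 hx1)
    (measurable_kernel α (n + 1) t).aestronglyMeasurable ?_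
    ((intervalIntegrable_betaDensity hα0 hα1 hx0 hx1).const_mul
      (|(ascPochhammer ℝ (n + 1)).eval (1 - α)| * (1 - b) ^ (α - 1 - (n + 1 : ℕ)))) ?_).2
  all_goals
    refine Eventually.of_forall fun y hy s (hs : s ≤ b) => ?_
    rw [uIoc_of_le hx0] at hy
  · exact abs_kernel_le hα1.le (n + 1) hs hb0 hb1 ⟨hy.1, hy.2.trans hx1⟩
  · exact hasDerivAt_kernel n hy.1 (one_sub_mul_pos (hs.trans_lt hb1) hy.1.le (hy.2.trans hx1))

lemma weight_nonneg (hl : l < 1) (hx0 : 0 ≤ x) (hx1 : x ≤ 1) : 0 ≤ weight α l x :=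
  mul_nonneg (mul_nonneg (rpow_nonneg hx0 _) (rpow_nonneg (sub_nonneg.2 hx1) _))
    (rpow_nonneg (one_sub_mul_pos hl hx0 hx1).le _)

lemma weight_mul_rpow_self (hx : 0 < x) :
    weight α l x * x ^ α = (1 - x) ^ (-α) * (1 - l * x) ^ (-α) := by
  rw [weight, rpow_neg hx.le]
  field_simp

lemma intervalIntegrable_outerBound (hα1 : α < 1) (hl : l < 1) :
    IntervalIntegrable (fun x => (1 - x) ^ (-α) * (1 - l * x) ^ (-α)) volume 0 1 := by
  refine (intervalIntegrable_one_sub_rpow (by linarith) 0 1).mul_continuousOn ?_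
  rw [uIcc_of_le zero_le_one]
  exact ContinuousOn.rpow_const (by fun_prop) fun x hx =>
    Or.inl (one_sub_mul_pos hl hx.1 hx.2).ne'

lemma exists_norm_weight_mul_innerIntegral_le (hα0 : 0 < α) (hα1 : α < 1) (hl : l < 1) (n : ℕ)
    (hb0 : 0 ≤ b) (hb1 : b < 1) :
    ∃ C, ∀ s ≤ b, ∀ x ∈ Ioc (0 : ℝ) 1,
      ‖weight α l x * innerIntegral α n s x‖ ≤ C * ((1 - x) ^ (-α) * (1 - l * x) ^ (-α)) := by
  obtain ⟨C, hC⟩ := exists_abs_innerIntegral_le hα0 hα1 n hb0 hb1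
  refine ⟨C, fun s hs x ⟨hx0, hx1⟩ => ?_⟩
  have hw := weight_nonneg (α := α) hl hx0.le hx1
  rw [Real.norm_eq_abs, abs_mul, abs_of_nonneg hw, ← weight_mul_rpow_self hx0]
  calc weight α l x * |innerIntegral α n s x| ≤ weight α l x * (C * x ^ α) :=
        mul_le_mul_of_nonneg_left (hC s hs x ⟨hx0.le, hx1⟩) hw
    _ = C * (weight α l x * x ^ α) := by ring

lemma aestronglyMeasurable_weight_mul_innerIntegral (hα0 : 0 < α) (hα1 : α < 1) (n : ℕ)
    (ht : t < 1) :
    AEStronglyMeasurable (fun x => weight α l x * innerIntegral α n t x)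
      (volume.restrict (Ι 0 1)) := by
  have hcont : ContinuousOn (innerIntegral α n t) (uIcc 0 1) :=
    continuousOn_primitive_interval' (intervalIntegrable_kernel hα0 hα1 n ht zero_le_one le_rfl)
      left_mem_uIcc
  exact (by unfold weight; fun_prop : Measurable (weight α l)).aestronglyMeasurable.mul
    ((hcont.aestronglyMeasurable measurableSet_uIcc).mono_set uIoc_subset_uIcc)

lemma intervalIntegrable_weight_mul_innerIntegral (hα0 : 0 < α) (hα1 : α < 1) (hl : l < 1) (n : ℕ)
    (ht : t < 1) :
    IntervalIntegrable (fun x => weight α l x * innerIntegral α n t x) volume 0 1 := by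
  obtain ⟨C, hC⟩ := exists_norm_weight_mul_innerIntegral_le hα0 hα1 hl n (le_max_right t 0)
    (max_lt ht one_pos)
  refine ((intervalIntegrable_outerBound hα1 hl).const_mul C).mono_fun'
    (aestronglyMeasurable_weight_mul_innerIntegral hα0 hα1 n ht) ?_
  filter_upwards [ae_restrict_mem measurableSet_uIoc] with x hx
  rw [uIoc_of_le zero_le_one] at hx
  exact hC t (le_max_left t 0) x hx

lemma hasDerivAt_outerIntegral (hα0 : 0 < α) (hα1 : α < 1) (hl : l < 1) (n : ℕ) (ht : t < 1) :
    HasDerivAt (outerIntegral α l n) (outerIntegral α l (n + 1) t) t := by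
  obtain ⟨b, hb0, hb1, hb⟩ := exists_Iic_mem_nhds ht
  obtain ⟨C, hC⟩ := exists_norm_weight_mul_innerIntegral_le hα0 hα1 hl (n + 1) hb0 hb1
  refine (hasDerivAt_integral_of_dominated_loc_of_deriv_le
    (F := fun s x => weight α l x * innerIntegral α n s x)
    (F' := fun s x => weight α l x * innerIntegral α (n + 1) s x) hb ?_
    (intervalIntegrable_weight_mul_innerIntegral hα0 hα1 hl n ht)
    (aestronglyMeasurable_weight_mul_innerIntegral hα0 hα1 (n + 1) ht) ?_
    ((intervalIntegrable_outerBound hα1 hl).const_mul C) ?_).2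
  · filter_upwards [Iio_mem_nhds ht] with s hs
    exact aestronglyMeasurable_weight_mul_innerIntegral hα0 hα1 n hs
  all_goals
    refine Eventually.of_forall fun x hx s (hs : s ≤ b) => ?_
    rw [uIoc_of_le zero_le_one] at hx
  · exact hC s hs x hx
  · exact (hasDerivAt_innerIntegral hα0 hα1 n (hs.trans_lt hb1) hx.1.le hx.2).const_mul _

/-- The operator `t(1-t)∂ₜ² + 2(α-t)∂ₜ - α(1-α)`, applied to a function whose `n`-th
`t`-derivative at `t` is `F n`. -/
def picardFuchs (α t : ℝ) (F : ℕ → ℝ) : ℝ :=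
  t * (1 - t) * F 2 + 2 * (α - t) * F 1 - α * (1 - α) * F 0

lemma intervalIntegrable_picardFuchs {f : ℕ → ℝ → ℝ} {a c : ℝ}
    (hf : ∀ n, IntervalIntegrable (f n) volume a c) :
    IntervalIntegrable (fun x => picardFuchs α t fun n => f n x) volume a c :=
  (((hf 2).const_mul _).add ((hf 1).const_mul _)).sub ((hf 0).const_mul _)

lemma picardFuchs_integral {f : ℕ → ℝ → ℝ} {a c : ℝ}
    (hf : ∀ n, IntervalIntegrable (f n) volume a c) :
    picardFuchs α t (fun n => ∫ x in a..c, f n x) =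
      ∫ x in a..c, picardFuchs α t fun n => f n x := by
  have h := fun n (r : ℝ) => (hf n).const_mul r
  simp only [picardFuchs]
  rw [integral_sub ((h 2 _).add (h 1 _)) (h 0 _),
    integral_add (h 2 _) (h 1 _), intervalIntegral.integral_const_mul,
    intervalIntegral.integral_const_mul, intervalIntegral.integral_const_mul]

def boundaryTerm (α t y : ℝ) : ℝ := (α - 1) * (y ^ α * (1 - y) ^ α * (1 - t * y) ^ (α - 2))

lemma hasDerivAt_boundaryTerm (hy0 : 0 < y) (hy1 : y < 1) (hty : 0 < 1 - t * y) :
    HasDerivAt (boundaryTerm α t) (picardFuchs α t fun n => kernel α n t y) y := by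
  have h1y : 0 < 1 - y := sub_pos.2 hy1
  have h := (((hasDerivAt_id y).rpow_const (p := α) (Or.inl hy0.ne')).mul
    (((hasDerivAt_id y).const_sub 1).rpow_const (p := α) (Or.inl h1y.ne'))).mul
    ((((hasDerivAt_id y).const_mul t).const_sub 1).rpow_const (p := α - 2) (Or.inl hty.ne'))
  refine (h.const_mul (α - 1)).congr_deriv ?_
  simp only [picardFuchs, kernel, ascPochhammer_zero, ascPochhammer_one, ascPochhammer_succ_eval,
    Polynomial.eval_one, Polynomial.eval_X, id]
  have hy_α : y ^ α = y ^ (α - 1) * y := by rw [← rpow_add_one hy0.ne', sub_add_cancel]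
  have hy_α1 : y ^ (α + 1) = y ^ (α - 1) * y ^ 2 := by
    rw [← rpow_add_natCast hy0.ne']; congr 1; push_cast; ring
  have h1y_α : (1 - y) ^ α = (1 - y) ^ (α - 1) * (1 - y) := by
    rw [← rpow_add_one h1y.ne', sub_add_cancel]
  have hty_α2 : (1 - t * y) ^ (α - 2) = (1 - t * y) ^ (α - 3) * (1 - t * y) := by
    rw [← rpow_add_one hty.ne']; congr 1; ring
  have hty_α1 : (1 - t * y) ^ (α - 1) = (1 - t * y) ^ (α - 3) * (1 - t * y) ^ 2 := by
    rw [← rpow_add_natCast hty.ne']; congr 1; push_cast; ring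
  simp only [Pi.mul_apply]
  push_cast
  rw [show α - 1 + 2 = α + 1 by ring, show α - 1 + 1 = α by ring, show α - 2 - 1 = α - 3 by ring,
    show α - 1 - 2 = α - 3 by ring, show α - 1 - 1 = α - 2 by ring, add_zero, sub_zero,
    hy_α, hy_α1, h1y_α, hty_α2, hty_α1]
  ring

lemma picardFuchs_innerIntegral (hα0 : 0 < α) (hα1 : α < 1) (ht : t < 1) (hx0 : 0 ≤ x)
    (hx1 : x ≤ 1) : picardFuchs α t (fun n => innerIntegral α n t x) = boundaryTerm α t x := by
  have hint := fun n => intervalIntegrable_kernel hα0 hα1 n ht hx0 hx1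
  have hcont : ContinuousOn (boundaryTerm α t) (Icc 0 x) := by
    unfold boundaryTerm
    refine continuousOn_const.mul (((continuousOn_id.rpow_const fun _ _ => Or.inr hα0.le).mul
      ((continuousOn_const.sub continuousOn_id).rpow_const fun _ _ => Or.inr hα0.le)).mul
      ((continuousOn_const.sub (continuousOn_const.mul continuousOn_id)).rpow_const
        fun y hy => Or.inl (one_sub_mul_pos ht hy.1 (hy.2.trans hx1)).ne'))
  have hderiv : ∀ y ∈ Ioo 0 x,
      HasDerivAt (boundaryTerm α t) (picardFuchs α t fun n => kernel α n t y) y := fun y hy =>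
    hasDerivAt_boundaryTerm hy.1 (hy.2.trans_le hx1)
      (one_sub_mul_pos ht hy.1.le (hy.2.le.trans hx1))
  simp only [innerIntegral]
  rw [picardFuchs_integral hint, integral_eq_sub_of_hasDerivAt_of_le hx0 hcont hderiv
    (intervalIntegrable_picardFuchs hint)]
  simp [boundaryTerm, zero_rpow hα0.ne']

lemma picardFuchs_outerIntegral (hα0 : 0 < α) (hα1 : α < 1) (hl : l < 1) (ht : t < 1) :
    picardFuchs α t (fun n => outerIntegral α l n t) =
      ∫ x in (0 : ℝ)..1, weight α l x * boundaryTerm α t x := by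
  simp only [outerIntegral]
  rw [picardFuchs_integral fun n => intervalIntegrable_weight_mul_innerIntegral hα0 hα1 hl n ht]
  refine integral_congr fun x hx => ?_
  rw [uIcc_of_le zero_le_one] at hx
  rw [← picardFuchs_innerIntegral hα0 hα1 ht hx.1 hx.2, picardFuchs, picardFuchs]
  ring

lemma weight_mul_boundaryTerm {l₁ l₂ : ℝ} (hx0 : 0 < x) (hx1 : x < 1) :
    weight α l₁ x * boundaryTerm α l₂ x =
      (α - 1) * ((1 - l₁ * x) ^ (-α) * (1 - l₂ * x) ^ (α - 2)) := by
  rw [weight, boundaryTerm, rpow_neg hx0.le, rpow_neg (sub_pos.2 hx1).le]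
  have := (rpow_pos_of_pos hx0 α).ne'
  have := (rpow_pos_of_pos (sub_pos.2 hx1) α).ne'
  field_simp

lemma hasDerivAt_ratio_rpow {l₁ l₂ : ℝ} (hne : l₁ ≠ l₂) (h₁ : 0 < 1 - l₁ * x)
    (h₂ : 0 < 1 - l₂ * x) :
    HasDerivAt (fun x => ((1 - l₁ * x) / (1 - l₂ * x)) ^ (1 - α) / (l₁ - l₂))
      ((α - 1) * ((1 - l₁ * x) ^ (-α) * (1 - l₂ * x) ^ (α - 2))) x := by
  have h := (((((hasDerivAt_id x).const_mul l₁).const_sub 1).div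
    (((hasDerivAt_id x).const_mul l₂).const_sub 1) h₂.ne').rpow_const (p := 1 - α)
    (Or.inl (div_pos h₁ h₂).ne')).div_const (l₁ - l₂)
  refine h.congr_deriv ?_
  simp only [Pi.div_apply, id]
  rw [show 1 - α - 1 = -α by ring, div_rpow h₁.le h₂.le, rpow_neg h₁.le, rpow_neg h₂.le,
    show α - 2 = α - (2 : ℕ) by norm_num, rpow_sub_natCast h₂.ne']
  have := (rpow_pos_of_pos h₁ α).ne'
  have := (rpow_pos_of_pos h₂ α).ne'
  field_simp
  ring

lemma integral_weight_mul_boundaryTerm {l₁ l₂ : ℝ} (hl₁ : l₁ < 1) (hl₂ : l₂ < 1) (hne : l₁ ≠ l₂) :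
    ∫ x in (0 : ℝ)..1, weight α l₁ x * boundaryTerm α l₂ x =
      (1 / (l₁ - l₂)) * (((1 - l₁) / (1 - l₂)) ^ (1 - α) - 1) := by
  have hpos : ∀ {l}, l < 1 → ∀ x ∈ uIcc (0 : ℝ) 1, 0 < 1 - l * x := fun hl x hx => by
    rw [uIcc_of_le zero_le_one] at hx
    exact one_sub_mul_pos hl hx.1 hx.2
  have hderiv := fun x hx => hasDerivAt_ratio_rpow (α := α) hne (hpos hl₁ x hx) (hpos hl₂ x hx)
  have hae : ∀ᵐ x, x ∈ Ι (0 : ℝ) 1 → weight α l₁ x * boundaryTerm α l₂ x =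
      (α - 1) * ((1 - l₁ * x) ^ (-α) * (1 - l₂ * x) ^ (α - 2)) := by
    filter_upwards [Measure.ae_ne volume 1] with x hx1 hx
    rw [uIoc_of_le zero_le_one] at hx
    exact weight_mul_boundaryTerm hx.1 (lt_of_le_of_ne hx.2 hx1)
  rw [integral_congr_ae hae,
    integral_eq_sub_of_hasDerivAt hderiv (ContinuousOn.intervalIntegrable <| continuousOn_const.mul
      ((ContinuousOn.rpow_const (by fun_prop) fun x hx => Or.inl (hpos hl₁ x hx).ne').mul
        (ContinuousOn.rpow_const (by fun_prop) fun x hx => Or.inl (hpos hl₂ x hx).ne')))]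
  simp only [mul_one, mul_zero, sub_zero, div_one, one_rpow]
  ring

end

end PeriodIntegral

/-- For `0 < α < 1` and distinct `λ₁, λ₂ ∈ (0,1)`, the
inhomogeneous Picard–Fuchs equation in `λ₂` holds:
`λ₂(1−λ₂) ∂²I/∂λ₂² + 2(α−λ₂) ∂I/∂λ₂ − α(1−α) I
  = (1/(λ₁−λ₂)) (((1−λ₁)/(1−λ₂))^(1−α) − 1)`. -/
theorem stmt6 (α : ℝ) (hα0 : 0 < α) (hα1 : α < 1)
    (l₁ l₂ : ℝ) (hl₁ : l₁ ∈ Set.Ioo (0 : ℝ) 1) (hl₂ : l₂ ∈ Set.Ioo (0 : ℝ) 1)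
    (hne : l₁ ≠ l₂) :
    l₂ * (1 - l₂) * deriv (deriv (fun t : ℝ => Idbl α l₁ t)) l₂
      + 2 * (α - l₂) * deriv (fun t : ℝ => Idbl α l₁ t) l₂
      - α * (1 - α) * Idbl α l₁ l₂
      = (1 / (l₁ - l₂)) * (((1 - l₁) / (1 - l₂)) ^ (1 - α) - 1) := by
  have hI : (fun t : ℝ => Idbl α l₁ t) = PeriodIntegral.outerIntegral α l₁ 0 :=
    funext (PeriodIntegral.Idbl_eq_outerIntegral α l₁)
  have hD1 : deriv (PeriodIntegral.outerIntegral α l₁ 0)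
      =ᶠ[𝓝 l₂] PeriodIntegral.outerIntegral α l₁ 1 := by
    filter_upwards [Iio_mem_nhds hl₂.2] with t ht
    exact (PeriodIntegral.hasDerivAt_outerIntegral hα0 hα1 hl₁.2 0 ht).deriv
  have hD2 : deriv (PeriodIntegral.outerIntegral α l₁ 1) l₂
      = PeriodIntegral.outerIntegral α l₁ 2 l₂ :=
    (PeriodIntegral.hasDerivAt_outerIntegral hα0 hα1 hl₁.2 1 hl₂.2).deriv
  rw [hI, hD1.deriv_eq, hD1.eq_of_nhds, hD2, PeriodIntegral.Idbl_eq_outerIntegral]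
  exact (PeriodIntegral.picardFuchs_outerIntegral hα0 hα1 hl₁.2 hl₂.2).trans
    (PeriodIntegral.integral_weight_mul_boundaryTerm hl₁.2 hl₂.2 hne)
end

section
/- Let α be a real number with 0 < α < 1. For λ ∈ (0,1) define J(λ) = ∫_0^1 x^{−α}(1−x)^{−α}(1−λx)^{−α} dx. Then for all λ ∈ (0,1): λ(1−λ)·J''(λ) + 2(1−α−λ)·J'(λ) − α(1−α)·J(λ) = 0. -/
open Real

/-- The Euler-type period integral `J(λ) = ∫₀¹ x^(−α)(1−x)^(−α)(1−λx)^(−α) dx`. -/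
noncomputable def Jper (α l : ℝ) : ℝ :=
  ∫ x in (0 : ℝ)..1, x ^ (-α) * (1 - x) ^ (-α) * (1 - l * x) ^ (-α)

/-!
Differentiating under the integral sign (legitimate because `1 - λx` stays away from `0` for
`λ` near a point of `(-∞, 1)`) gives `J' = α E(1-α, -α, -α-1)` and `J'' = α(α+1) E(2-α, -α, -α-2)`,
where `E(p, q, r)(λ) = ∫₀¹ x^p (1-x)^q (1-λx)^r dx`. The Picard–Fuchs combination of the three
integrands is the exact `x`-derivative of `-α x^(1-α) (1-x)^(1-α) (1-λx)^(-α-1)`, which vanishes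
at `x = 0` and `x = 1` since `1 - α > 0`, so the combination integrates to zero.
-/

open Set MeasureTheory intervalIntegral Metric

lemma one_sub_mul_pos {l x : ℝ} (hl : l < 1) (hx : x ∈ Icc (0 : ℝ) 1) : 0 < 1 - l * x := by
  rcases le_or_gt l 0 with hl0 | hl0
  · nlinarith [hx.1]
  · nlinarith [hx.2]

lemma intervalIntegrable_rpow_mul_one_sub_rpow {p q : ℝ} (hp : -1 < p) (hq : -1 < q) :
    IntervalIntegrable (fun x : ℝ => x ^ p * (1 - x) ^ q) volume 0 1 := by
  have h_right : IntervalIntegrable (fun x : ℝ => (1 - x) ^ q) volume (1 / 2) 1 := by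
    convert ((intervalIntegrable_rpow' hq (a := 0) (b := 1 / 2)).comp_sub_left 1).symm using 1
    · norm_num
    · norm_num
  refine IntervalIntegrable.trans (b := 1 / 2) ?_ ?_
  · refine (intervalIntegrable_rpow' hp).mul_continuousOn
      (ContinuousOn.rpow_const (by fun_prop) fun x hx => Or.inl ?_)
    rw [uIcc_of_le (by norm_num)] at hx
    linarith [hx.2]
  · refine h_right.continuousOn_mul
      (ContinuousOn.rpow_const (by fun_prop) fun x hx => Or.inl ?_)
    rw [uIcc_of_le (by norm_num)] at hx
    linarith [hx.1]

lemma intervalIntegrable_eulerIntegrand {p q l : ℝ} (hp : -1 < p) (hq : -1 < q) (hl : l < 1)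
    (r : ℝ) :
    IntervalIntegrable (fun x : ℝ => x ^ p * (1 - x) ^ q * (1 - l * x) ^ r) volume 0 1 := by
  refine (intervalIntegrable_rpow_mul_one_sub_rpow hp hq).mul_continuousOn
    (ContinuousOn.rpow_const (by fun_prop) fun x hx => Or.inl ?_)
  rw [uIcc_of_le zero_le_one] at hx
  exact (one_sub_mul_pos hl hx).ne'

noncomputable def eulerIntegral (p q r l : ℝ) : ℝ :=
  ∫ x in (0 : ℝ)..1, x ^ p * (1 - x) ^ q * (1 - l * x) ^ r

lemma hasDerivAt_eulerIntegral_integrand {p q r x l : ℝ} (hx : 0 < x) (hlx : 0 < 1 - l * x) :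
    HasDerivAt (fun l => x ^ p * (1 - x) ^ q * (1 - l * x) ^ r)
      (-r * (x ^ (p + 1) * (1 - x) ^ q * (1 - l * x) ^ (r - 1))) l := by
  have h := (((hasDerivAt_id l).mul_const x).const_sub 1).rpow_const (p := r) (Or.inl hlx.ne')
  refine (h.const_mul (x ^ p * (1 - x) ^ q)).congr_deriv ?_
  rw [rpow_add_one hx.ne', id]
  ring

theorem hasDerivAt_eulerIntegral {p q l : ℝ} (hp : -1 < p) (hq : -1 < q) (hl : l < 1) (r : ℝ) :
    HasDerivAt (eulerIntegral p q r) (-r * eulerIntegral (p + 1) q (r - 1) l) l := by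
  set δ := (1 - l) / 2 with hδ_def
  have hδ : 0 < δ := by linarith
  have h_pos : ∀ z ∈ closedBall l δ ×ˢ Icc (0 : ℝ) 1, 0 < 1 - z.1 * z.2 := by
    rintro ⟨l', x⟩ ⟨hl', hx⟩
    have := (abs_le.mp (mem_closedBall.mp hl')).2
    exact one_sub_mul_pos (by linarith) hx
  obtain ⟨C, hC⟩ := ((isCompact_closedBall l δ).prod isCompact_Icc).exists_bound_of_continuousOn
    (ContinuousOn.rpow_const (p := r - 1) (by fun_prop) fun z hz => Or.inl (h_pos z hz).ne')
  have key := hasDerivAt_integral_of_dominated_loc_of_deriv_le (μ := volume) (a := 0) (b := 1)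
    (F := fun l x => x ^ p * (1 - x) ^ q * (1 - l * x) ^ r)
    (F' := fun l x => -r * (x ^ (p + 1) * (1 - x) ^ q * (1 - l * x) ^ (r - 1)))
    (bound := fun x => |r| * C * (x ^ (p + 1) * (1 - x) ^ q))
    (ball_mem_nhds l hδ) (.of_forall fun _ => by fun_prop)
    (intervalIntegrable_eulerIntegrand hp hq hl r) (by fun_prop) ?bound
    ((intervalIntegrable_rpow_mul_one_sub_rpow (by linarith) hq).const_mul _) ?deriv
  · have h := key.2
    rw [intervalIntegral.integral_const_mul] at h
    exact h
  case bound =>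
    refine .of_forall fun x hx l' hl' => ?_
    rw [uIoc_of_le zero_le_one] at hx
    have hz : (l', x) ∈ closedBall l δ ×ˢ Icc (0 : ℝ) 1 :=
      ⟨ball_subset_closedBall hl', Ioc_subset_Icc_self hx⟩
    have h_nonneg : 0 ≤ x ^ (p + 1) * (1 - x) ^ q :=
      mul_nonneg (rpow_nonneg hx.1.le _) (rpow_nonneg (by linarith [hx.2]) _)
    rw [norm_mul, norm_mul, norm_neg, Real.norm_of_nonneg h_nonneg, Real.norm_eq_abs]
    calc |r| * (x ^ (p + 1) * (1 - x) ^ q * ‖(1 - l' * x) ^ (r - 1)‖)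
        ≤ |r| * (x ^ (p + 1) * (1 - x) ^ q * C) := by gcongr; exact hC _ hz
      _ = |r| * C * (x ^ (p + 1) * (1 - x) ^ q) := by ring
  case deriv =>
    refine .of_forall fun x hx l' hl' => ?_
    rw [uIoc_of_le zero_le_one] at hx
    exact hasDerivAt_eulerIntegral_integrand hx.1
      (h_pos (l', x) ⟨ball_subset_closedBall hl', Ioc_subset_Icc_self hx⟩)

lemma hasDerivAt_picardFuchs_primitive {α l x : ℝ} (hx : x ∈ Ioo (0 : ℝ) 1)
    (hlx : 0 < 1 - l * x) :
    HasDerivAt (fun x => -α * (x ^ (1 - α) * (1 - x) ^ (1 - α) * (1 - l * x) ^ (-α - 1)))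
      (l * (1 - l) * (α * (α + 1) * (x ^ (2 - α) * (1 - x) ^ (-α) * (1 - l * x) ^ (-α - 2)))
        + 2 * (1 - α - l) * (α * (x ^ (1 - α) * (1 - x) ^ (-α) * (1 - l * x) ^ (-α - 1)))
        - α * (1 - α) * (x ^ (-α) * (1 - x) ^ (-α) * (1 - l * x) ^ (-α))) x := by
  obtain ⟨hx0, hx1⟩ := hx
  have hx1' : 0 < 1 - x := by linarith
  have hu := (hasDerivAt_id x).rpow_const (p := 1 - α) (Or.inl hx0.ne')
  have hv := ((hasDerivAt_id x).const_sub 1).rpow_const (p := 1 - α) (Or.inl hx1'.ne')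
  have hw := (((hasDerivAt_id x).const_mul l).const_sub 1).rpow_const (p := -α - 1)
    (Or.inl hlx.ne')
  refine (((hu.mul hv).mul hw).const_mul (-α)).congr_deriv ?_
  have e1 : x ^ (1 - α) = x ^ (-α) * x := by rw [← rpow_add_one hx0.ne']; ring_nf
  have e2 : x ^ (2 - α) = x ^ (-α) * x * x := by
    rw [← rpow_add_one hx0.ne', ← rpow_add_one hx0.ne']; ring_nf
  have e3 : (1 - x) ^ (1 - α) = (1 - x) ^ (-α) * (1 - x) := by
    rw [← rpow_add_one hx1'.ne']; ring_nf
  have e4 : (1 - l * x) ^ (-α - 1) = (1 - l * x) ^ (-α - 2) * (1 - l * x) := by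
    rw [← rpow_add_one hlx.ne']; ring_nf
  have e5 : (1 - l * x) ^ (-α) = (1 - l * x) ^ (-α - 2) * (1 - l * x) * (1 - l * x) := by
    rw [← rpow_add_one hlx.ne', ← rpow_add_one hlx.ne']; ring_nf
  simp only [id, Pi.mul_apply]
  rw [show 1 - α - 1 = -α by ring, show -α - 1 - 1 = -α - 2 by ring, e1, e2, e3, e4, e5]
  ring

theorem picardFuchs_eulerIntegral {α l : ℝ} (hα : α < 1) (hl : l < 1) :
    l * (1 - l) * (α * (α + 1) * eulerIntegral (2 - α) (-α) (-α - 2) l)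
      + 2 * (1 - α - l) * (α * eulerIntegral (1 - α) (-α) (-α - 1) l)
      - α * (1 - α) * eulerIntegral (-α) (-α) (-α) l = 0 := by
  have hq : -1 < -α := by linarith
  have h1α : 0 < 1 - α := by linarith
  have h₂ := intervalIntegrable_eulerIntegrand (p := 2 - α) (by linarith) hq hl (-α - 2)
  have h₁ := intervalIntegrable_eulerIntegrand (p := 1 - α) (by linarith) hq hl (-α - 1)
  have h₀ := intervalIntegrable_eulerIntegrand hq hq hl (-α)
  have h_cont : ContinuousOn
      (fun x => -α * (x ^ (1 - α) * (1 - x) ^ (1 - α) * (1 - l * x) ^ (-α - 1))) (Icc 0 1) :=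
    continuousOn_const.mul (((continuous_rpow_const h1α.le).continuousOn.mul
      ((continuous_rpow_const h1α.le).comp (by fun_prop)).continuousOn).mul
      (ContinuousOn.rpow_const (by fun_prop) fun x hx => Or.inl (one_sub_mul_pos hl hx).ne'))
  simp only [eulerIntegral, ← intervalIntegral.integral_const_mul]
  rw [← integral_add ((h₂.const_mul _).const_mul _) ((h₁.const_mul _).const_mul _),
    ← integral_sub (((h₂.const_mul _).const_mul _).add ((h₁.const_mul _).const_mul _))
      (h₀.const_mul _),
    integral_eq_sub_of_hasDerivAt_of_le zero_le_one h_cont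
      (fun x hx => hasDerivAt_picardFuchs_primitive hx
        (one_sub_mul_pos hl (Ioo_subset_Icc_self hx)))
      ((((h₂.const_mul _).const_mul _).add ((h₁.const_mul _).const_mul _)).sub (h₀.const_mul _))]
  simp [zero_rpow h1α.ne']

theorem stmt7_general (α : ℝ) (hα1 : α < 1)
    (l : ℝ) (hl : l ∈ Set.Ioo (0 : ℝ) 1) :
    l * (1 - l) * deriv (deriv (Jper α)) l
      + 2 * (1 - α - l) * deriv (Jper α) l
      - α * (1 - α) * Jper α l = 0 := by
  have hq : -1 < -α := by linarith
  have hJ : Jper α = eulerIntegral (-α) (-α) (-α) := rfl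
  have hJ' : ∀ l' < 1, HasDerivAt (eulerIntegral (-α) (-α) (-α))
      (α * eulerIntegral (1 - α) (-α) (-α - 1) l') l' := fun l' hl' =>
    (hasDerivAt_eulerIntegral hq hq hl' (-α)).congr_deriv (by rw [neg_neg, neg_add_eq_sub])
  have hJ'' : HasDerivAt (fun l' => α * eulerIntegral (1 - α) (-α) (-α - 1) l')
      (α * ((α + 1) * eulerIntegral (2 - α) (-α) (-α - 2) l)) l :=
    ((hasDerivAt_eulerIntegral (p := 1 - α) (by linarith) hq hl.2 (-α - 1)).congr_deriv
      (by ring_nf)).const_mul α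
  have h_deriv : deriv (eulerIntegral (-α) (-α) (-α)) =ᶠ[nhds l]
      fun l' => α * eulerIntegral (1 - α) (-α) (-α - 1) l' :=
    (eventually_lt_nhds hl.2).mono fun l' hl' => (hJ' l' hl').deriv
  rw [hJ, h_deriv.deriv_eq, hJ''.deriv, (hJ' l hl.2).deriv]
  linear_combination picardFuchs_eulerIntegral hα1 hl.2

/-- For `0 < α < 1` and `λ ∈ (0,1)`, the period integral `J`
is annihilated by the homogeneous Picard–Fuchs operator:
`λ(1−λ) J'' + 2(1−α−λ) J' − α(1−α) J = 0`. -/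
theorem stmt7 (α : ℝ) (hα0 : 0 < α) (hα1 : α < 1)
    (l : ℝ) (hl : l ∈ Set.Ioo (0 : ℝ) 1) :
    l * (1 - l) * deriv (deriv (Jper α)) l
      + 2 * (1 - α - l) * deriv (Jper α) l
      - α * (1 - α) * Jper α l = 0 :=
  stmt7_general α hα1 l hl
end

section
/- Let N and A be integers with N ≥ 2, N ≠ 2, 0 < A < N and gcd(N, A) = 1, and let ζ ∈ ℂ be a primitive N-th root of unity. Let c₁, c₂, c₃, c₄, c₅, c₆ ∈ ℂ. Suppose that for all integers i, j with 0 ≤ i ≤ N−1 and 0 ≤ j ≤ N−1: c₁ + c₂·ζ^{Aj} + c₃·ζ^{(N−2A)i + (2A−N)j} + c₄·ζ^{(N−A)i + (2A−N)j} + c₅·ζ^{(N−A)i} + c₆·ζ^{(N−2A)i + Aj} = 0. Then c₁ = c₂ = c₃ = c₄ = c₅ = c₆ = 0. -/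
/-!
Each term `(i, j) ↦ ζ ^ (a * i + b * j)` is a character of `ℤ × ℤ`, and it depends only on
`(a, b)` modulo `N`; by periodicity, vanishing of the combination for `0 ≤ i, j < N` means vanishing
on all of `ℤ × ℤ`. Modulo `N` the six exponent pairs are `A` times the vertices of a hexagon, hence
pairwise distinct once `2 * A ≢ 0 [MOD N]`. Distinct characters are linearly independent
(Dedekind), so all coefficients vanish.
-/

open Function

section

variable {K : Type*} [Field K] {ζ : K} {N : ℕ}

theorem IsPrimitiveRoot.zpow_eq_zpow_iff (hζ : IsPrimitiveRoot ζ N) (hN : N ≠ 0) {m n : ℤ} :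
    ζ ^ m = ζ ^ n ↔ (m : ZMod N) = n := by
  rw [ZMod.intCast_eq_intCast_iff_dvd_sub, ← hζ.zpow_eq_one_iff_dvd,
    zpow_sub₀ (hζ.ne_zero hN), div_eq_one_iff_eq (zpow_ne_zero _ (hζ.ne_zero hN)), eq_comm]

def reducePair (N : ℕ) (e : ℤ × ℤ) : ZMod N × ZMod N := (e.1, e.2)

def zpowChar (hζ : ζ ≠ 0) (e : ℤ × ℤ) : Multiplicative (ℤ × ℤ) →* K where
  toFun p := ζ ^ (e.1 * p.toAdd.1 + e.2 * p.toAdd.2)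
  map_one' := by simp
  map_mul' p q := by
    simp only [toAdd_mul, Prod.fst_add, Prod.snd_add, ← zpow_add₀ hζ]
    ring_nf

theorem IsPrimitiveRoot.reducePair_eq_of_zpowChar_eq (hζ : IsPrimitiveRoot ζ N) (hN : N ≠ 0)
    {e e' : ℤ × ℤ} (h : zpowChar (hζ.ne_zero hN) e = zpowChar (hζ.ne_zero hN) e') :
    reducePair N e = reducePair N e' := by
  have h₁ := DFunLike.congr_fun h (.ofAdd (1, 0))
  have h₂ := DFunLike.congr_fun h (.ofAdd (0, 1))
  simp only [zpowChar, MonoidHom.coe_mk, OneHom.coe_mk, toAdd_ofAdd, mul_one, mul_zero, add_zero,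
    zero_add, hζ.zpow_eq_zpow_iff hN] at h₁ h₂
  exact Prod.ext h₁ h₂

theorem IsPrimitiveRoot.eq_zero_of_sum_zpow_eq_zero (hζ : IsPrimitiveRoot ζ N) (hN : N ≠ 0)
    {ι : Type*} [Fintype ι] {e : ι → ℤ × ℤ} (he : Injective (reducePair N ∘ e)) (c : ι → K)
    (h : ∀ i j : ℤ, 0 ≤ i → i < N → 0 ≤ j → j < N →
      ∑ m, c m * ζ ^ ((e m).1 * i + (e m).2 * j) = 0) :
    ∀ m, c m = 0 := by
  have hind : LinearIndependent K fun m => ⇑(zpowChar (hζ.ne_zero hN) (e m)) :=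
    (linearIndependent_monoidHom _ K).comp _ fun m k hmk =>
      he (hζ.reducePair_eq_of_zpowChar_eq hN hmk)
  refine Fintype.linearIndependent_iff.mp hind c (funext fun p => ?_)
  simp only [Finset.sum_apply, Pi.smul_apply, smul_eq_mul, Pi.zero_apply, zpowChar,
    MonoidHom.coe_mk, OneHom.coe_mk]
  set i := p.toAdd.1
  set j := p.toAdd.2
  have hN' : (0 : ℤ) < N := by omega
  have hmod (m : ι) :
      ζ ^ ((e m).1 * (i % N) + (e m).2 * (j % N)) = ζ ^ ((e m).1 * i + (e m).2 * j) := by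
    rw [hζ.zpow_eq_zpow_iff hN]
    push_cast [ZMod.intCast_mod]
    rfl
  simpa only [hmod] using h (i % N) (j % N) (Int.emod_nonneg _ hN'.ne') (Int.emod_lt_of_pos _ hN')
    (Int.emod_nonneg _ hN'.ne') (Int.emod_lt_of_pos _ hN')

end

/- The points are `a • (-1, 1) + a • r` for the six vectors `r = ±(1, 0), ±(0, 1), ±(1, -1)`,
whose pairwise differences have entries in `{0, ±1, ±2}`. -/
theorem hexagon_injective {R : Type*} [CommRing R] {a : R} (h2a : 2 * a ≠ 0) :
    Injective ![(0, 0), (0, a), (-(2 * a), 2 * a), (-a, 2 * a), (-a, 0), (-(2 * a), a)] := by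
  intro m k hmk
  fin_cases m <;> fin_cases k <;> simp [Prod.ext_iff] at hmk ⊢ <;> grind

theorem stmt9_general (N A : ℕ) (hN : 2 ≤ N) (hN2 : N ≠ 2)
    (hgcd : Nat.gcd N A = 1) (ζ : ℂ) (hζ : IsPrimitiveRoot ζ N)
    (c₁ c₂ c₃ c₄ c₅ c₆ : ℂ)
    (h : ∀ i j : ℤ, 0 ≤ i → i ≤ (N : ℤ) - 1 → 0 ≤ j → j ≤ (N : ℤ) - 1 →
      c₁ + c₂ * ζ ^ ((A : ℤ) * j)
        + c₃ * ζ ^ (((N : ℤ) - 2 * A) * i + (2 * (A : ℤ) - N) * j)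
        + c₄ * ζ ^ (((N : ℤ) - A) * i + (2 * (A : ℤ) - N) * j)
        + c₅ * ζ ^ (((N : ℤ) - A) * i)
        + c₆ * ζ ^ (((N : ℤ) - 2 * A) * i + (A : ℤ) * j) = 0) :
    c₁ = 0 ∧ c₂ = 0 ∧ c₃ = 0 ∧ c₄ = 0 ∧ c₅ = 0 ∧ c₆ = 0 := by
  have h2A : (2 * A : ZMod N) ≠ 0 := by
    rw [← Nat.cast_ofNat, ← Nat.cast_mul, Ne, ZMod.natCast_eq_zero_iff]
    intro hdvd
    have := Nat.le_of_dvd two_pos (Nat.Coprime.dvd_of_dvd_mul_right hgcd hdvd)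
    omega
  let e : Fin 6 → ℤ × ℤ := ![(0, 0), (0, A), (N - 2 * A, 2 * A - N), (N - A, 2 * A - N),
    (N - A, 0), (N - 2 * A, A)]
  have he : Injective (reducePair N ∘ e) := by
    convert hexagon_injective h2A using 1
    funext m
    fin_cases m <;> simp [reducePair, e]
  have hc := hζ.eq_zero_of_sum_zpow_eq_zero (by omega) he ![c₁, c₂, c₃, c₄, c₅, c₆]
    fun i j hi₀ hi hj₀ hj => by
      simpa [Fin.sum_univ_six, e] using h i j hi₀ (by omega) hj₀ (by omega)
  exact ⟨hc 0, hc 1, hc 2, hc 3, hc 4, hc 5⟩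

/-- Let `N ≥ 2`, `N ≠ 2`, `0 < A < N`, `gcd(N, A) = 1` and let
`ζ ∈ ℂ` be a primitive `N`-th root of unity.  If the six coefficients
`c₁, …, c₆ ∈ ℂ` satisfy
`c₁ + c₂ ζ^{Aj} + c₃ ζ^{(N−2A)i+(2A−N)j} + c₄ ζ^{(N−A)i+(2A−N)j}
  + c₅ ζ^{(N−A)i} + c₆ ζ^{(N−2A)i+Aj} = 0`
for all `0 ≤ i, j ≤ N−1`, then `c₁ = ⋯ = c₆ = 0`. -/
theorem stmt9 (N A : ℕ) (hN : 2 ≤ N) (hN2 : N ≠ 2) (hA0 : 0 < A) (hAN : A < N)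
    (hgcd : Nat.gcd N A = 1) (ζ : ℂ) (hζ : IsPrimitiveRoot ζ N)
    (c₁ c₂ c₃ c₄ c₅ c₆ : ℂ)
    (h : ∀ i j : ℤ, 0 ≤ i → i ≤ (N : ℤ) - 1 → 0 ≤ j → j ≤ (N : ℤ) - 1 →
      c₁ + c₂ * ζ ^ ((A : ℤ) * j)
        + c₃ * ζ ^ (((N : ℤ) - 2 * A) * i + (2 * (A : ℤ) - N) * j)
        + c₄ * ζ ^ (((N : ℤ) - A) * i + (2 * (A : ℤ) - N) * j)
        + c₅ * ζ ^ (((N : ℤ) - A) * i)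
        + c₆ * ζ ^ (((N : ℤ) - 2 * A) * i + (A : ℤ) * j) = 0) :
    c₁ = 0 ∧ c₂ = 0 ∧ c₃ = 0 ∧ c₄ = 0 ∧ c₅ = 0 ∧ c₆ = 0 :=
  stmt9_general N A hN hN2 hgcd ζ hζ c₁ c₂ c₃ c₄ c₅ c₆ h
end

section
/- Let N and A be integers with 0 < A < N and 2A ≠ N. Define on the open square D = (0,1) × (0,1) the six functions (all powers being real powers with the indicated rational exponents): h₁(λ₁,λ₂) = 1; h₂(λ₁,λ₂) = (1−λ₁)^{−A/N}(1−λ₂)^{A/N}; h₃(λ₁,λ₂) = λ₁^{(2A−N)/N}(1−λ₁)^{(N−2A)/N}·λ₂^{(N−2A)/N}(1−λ₂)^{(2A−N)/N}; h₄(λ₁,λ₂) = λ₁^{(A−N)/N}(1−λ₁)^{(N−2A)/N}·λ₂^{(N−A)/N}(1−λ₂)^{(2A−N)/N}; h₅(λ₁,λ₂) = λ₁^{(A−N)/N}·λ₂^{(N−A)/N}; h₆(λ₁,λ₂) = λ₁^{(2A−N)/N}(1−λ₁)^{−A/N}·λ₂^{(N−2A)/N}(1−λ₂)^{A/N}. If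 c₁, …, c₆ ∈ ℂ satisfy c₁h₁(λ₁,λ₂) + c₂h₂(λ₁,λ₂) + c₃h₃(λ₁,λ₂) + c₄h₄(λ₁,λ₂) + c₅h₅(λ₁,λ₂) + c₆h₆(λ₁,λ₂) = 0 for all (λ₁,λ₂) ∈ D, then c₁ = ⋯ = c₆ = 0. -/
/-! Each of the six functions has the form `h(λ₁, λ₂) = f(λ₁) / f(λ₂)` with
`f(λ) = λ^p (1 - λ)^q`. Fixing `λ₂`, a relation
`∑ cᵢ hᵢ = 0` becomes a relation among the `f`'s in `λ₁`. Multiplying it by `λ₁^(1 - A/N)` and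
letting `λ₁ → 0` keeps only the terms with the smallest `p`, namely `h₄, h₅`; multiplying by
`(1 - λ₁)^(A/N)` and letting `λ₁ → 1` keeps only those with the smallest `q`, namely `h₂, h₆`.
Each of these limits, and what is left of the relation once those four coefficients vanish,
is of the form `c + d t^e = 0` on `(0, 1)` with `e ≠ 0`, which forces `c = d = 0`. -/

open Real Filter Set Topology

theorem continuousAt_rpow_mul_one_sub_rpow_zero {p : ℝ} (hp : 0 ≤ p) (q : ℝ) :
    ContinuousAt (fun x : ℝ => x ^ p * (1 - x) ^ q) 0 :=
  (continuousAt_rpow_const 0 p (Or.inr hp)).mul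
    ((continuous_const.sub continuous_id).continuousAt.rpow_const (Or.inl (by norm_num)))

theorem sum_coeff_of_min_exponent_eq_zero {ι : Type*} (s : Finset ι) (c : ι → ℂ)
    (p q : ι → ℝ) {r : ℝ} (hr : ∀ i ∈ s, r ≤ p i)
    (h : ∀ x ∈ Ioo (0 : ℝ) 1, ∑ i ∈ s, c i * ((x ^ p i * (1 - x) ^ q i : ℝ) : ℂ) = 0) :
    ∑ i ∈ s with p i = r, c i = 0 := by
  set F : ℝ → ℂ := fun x => ∑ i ∈ s, c i * ((x ^ (p i - r) * (1 - x) ^ q i : ℝ) : ℂ)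
  have hF : ContinuousAt F 0 := by
    refine tendsto_finsetSum _ fun i hi => continuousAt_const.mul ?_
    exact Complex.continuous_ofReal.continuousAt.comp
      (continuousAt_rpow_mul_one_sub_rpow_zero (sub_nonneg.2 (hr i hi)) (q i))
  have hF0 : F =ᶠ[𝓝[>] 0] 0 := by
    filter_upwards [Ioo_mem_nhdsGT (zero_lt_one' ℝ)] with x hx
    have : F x = ((x ^ (-r) : ℝ) : ℂ) * ∑ i ∈ s, c i * ((x ^ p i * (1 - x) ^ q i : ℝ) : ℂ) := by
      simp only [F, Finset.mul_sum, sub_eq_add_neg, rpow_add hx.1]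
      push_cast
      exact Finset.sum_congr rfl fun i _ => by ring
    rw [this, h x hx, mul_zero, Pi.zero_apply]
  have hF00 : F 0 = 0 := tendsto_nhds_unique (hF.tendsto.mono_left nhdsWithin_le_nhds)
    (tendsto_const_nhds.congr' hF0.symm)
  rw [Finset.sum_filter]
  refine Eq.trans (Finset.sum_congr rfl fun i _ => ?_) hF00
  split_ifs with hi
  · simp [hi]
  · simp [zero_rpow (sub_ne_zero.2 hi)]

theorem sum_coeff_of_min_exponent_one_sub_eq_zero {ι : Type*} (s : Finset ι) (c : ι → ℂ)
    (p q : ι → ℝ) {r : ℝ} (hr : ∀ i ∈ s, r ≤ q i)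
    (h : ∀ x ∈ Ioo (0 : ℝ) 1, ∑ i ∈ s, c i * ((x ^ p i * (1 - x) ^ q i : ℝ) : ℂ) = 0) :
    ∑ i ∈ s with q i = r, c i = 0 :=
  sum_coeff_of_min_exponent_eq_zero s c q p hr fun x hx => by
    simpa only [sub_sub_cancel, mul_comm] using h (1 - x) ⟨by linarith [hx.2], by linarith [hx.1]⟩

theorem eq_zero_of_forall_add_mul_rpow_eq_zero {c d : ℂ} {e : ℝ} (he : e ≠ 0)
    (h : ∀ t ∈ Ioo (0 : ℝ) 1, c + d * ((t ^ e : ℝ) : ℂ) = 0) : c = 0 ∧ d = 0 := by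
  have hne : (((1 / 2 : ℝ) ^ e : ℝ) : ℂ) ≠ ((1 / 3 : ℝ) ^ e : ℝ) := by
    rw [Ne, Complex.ofReal_inj, rpow_left_inj (by norm_num) (by norm_num) he]; norm_num
  have h2 := h (1 / 2) ⟨by norm_num, by norm_num⟩
  have h3 := h (1 / 3) ⟨by norm_num, by norm_num⟩
  have hd : d = 0 := by
    have : d * ((((1 / 2 : ℝ) ^ e : ℝ) : ℂ) - ((1 / 3 : ℝ) ^ e : ℝ)) = 0 := by
      linear_combination h2 - h3
    exact (mul_eq_zero.1 this).resolve_right (sub_ne_zero.2 hne)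
  exact ⟨by simpa [hd] using h2, hd⟩

theorem rpow_div_one_add_mul_one_sub_rpow_neg {t : ℝ} (ht : 0 < t) (e : ℝ) :
    (t / (1 + t)) ^ e * (1 - t / (1 + t)) ^ (-e) = t ^ e := by
  have h1 : 1 - t / (1 + t) = (1 + t)⁻¹ := by field_simp; ring
  rw [h1, div_rpow ht.le (by positivity), inv_rpow (by positivity), rpow_neg (by positivity),
    inv_inv, div_mul_cancel₀ _ (by positivity)]

def lamExponent (a : ℝ) : Fin 6 → ℝ := ![0, 0, 2 * a - 1, a - 1, a - 1, 2 * a - 1]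

def oneSubLamExponent (a : ℝ) : Fin 6 → ℝ := ![0, -a, 1 - 2 * a, 1 - 2 * a, 0, -a]

/-- With `a = A / N`, `hFun a i` is the function `h_{i+1}` of the statement. -/
noncomputable def hFun (a : ℝ) (i : Fin 6) (x y : ℝ) : ℝ :=
  x ^ lamExponent a i * (1 - x) ^ oneSubLamExponent a i *
    (y ^ (-lamExponent a i) * (1 - y) ^ (-oneSubLamExponent a i))

theorem sum_coeff_mul_rpow_eq_zero_of_sum_hFun {a : ℝ} {c : Fin 6 → ℂ}
    (h : ∀ x ∈ Ioo (0 : ℝ) 1, ∀ y ∈ Ioo (0 : ℝ) 1, ∑ i, c i * (hFun a i x y : ℂ) = 0)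
    {y : ℝ} (hy : y ∈ Ioo (0 : ℝ) 1) (x : ℝ) (hx : x ∈ Ioo (0 : ℝ) 1) :
    ∑ i, c i * ((y ^ (-lamExponent a i) * (1 - y) ^ (-oneSubLamExponent a i) : ℝ) : ℂ) *
      ((x ^ lamExponent a i * (1 - x) ^ oneSubLamExponent a i : ℝ) : ℂ) = 0 := by
  simpa only [hFun, Complex.ofReal_mul, mul_assoc, mul_comm] using h x hx y hy

theorem coeff_three_four_eq_zero {a : ℝ} (ha0 : 0 < a) (ha1 : a < 1) (ha : 2 * a ≠ 1)
    {c : Fin 6 → ℂ}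
    (h : ∀ x ∈ Ioo (0 : ℝ) 1, ∀ y ∈ Ioo (0 : ℝ) 1, ∑ i, c i * (hFun a i x y : ℂ) = 0) :
    c 3 = 0 ∧ c 4 = 0 := by
  refine (eq_zero_of_forall_add_mul_rpow_eq_zero (e := 2 * a - 1) (sub_ne_zero.2 ha)
    fun t ht => ?_).symm
  have key := sum_coeff_of_min_exponent_eq_zero _ _ _ _ (r := a - 1)
    (by intro i _; fin_cases i <;> simp [lamExponent] <;> linarith)
    (sum_coeff_mul_rpow_eq_zero_of_sum_hFun h (y := 1 - t) ⟨by linarith [ht.2], by linarith [ht.1]⟩)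
  have h0 : (0 : ℝ) ≠ a - 1 := by linarith
  have h2 : 2 * a - 1 ≠ a - 1 := by linarith
  rw [Finset.sum_filter, Fin.sum_univ_six] at key
  simp only [lamExponent, Fin.isValue, Matrix.cons_val_zero, h0, ↓reduceIte, Matrix.cons_val_one,
    add_zero, Matrix.cons_val, h2, neg_sub, sub_sub_cancel, oneSubLamExponent, Complex.ofReal_mul,
    zero_add, neg_zero, rpow_zero, mul_one] at key
  have hu : (((1 - t) ^ (1 - a) : ℝ) : ℂ) ≠ 0 := by
    exact_mod_cast (rpow_pos_of_pos (by linarith [ht.2]) _).ne'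
  exact mul_left_cancel₀ hu (by linear_combination key)

theorem coeff_one_five_eq_zero {a : ℝ} (ha0 : 0 < a) (ha1 : a < 1) (ha : 2 * a ≠ 1)
    {c : Fin 6 → ℂ}
    (h : ∀ x ∈ Ioo (0 : ℝ) 1, ∀ y ∈ Ioo (0 : ℝ) 1, ∑ i, c i * (hFun a i x y : ℂ) = 0) :
    c 1 = 0 ∧ c 5 = 0 := by
  refine eq_zero_of_forall_add_mul_rpow_eq_zero (e := 1 - 2 * a) (sub_ne_zero.2 ha.symm)
    fun t ht => ?_
  have key := sum_coeff_of_min_exponent_one_sub_eq_zero _ _ _ _ (r := -a)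
    (by intro i _; fin_cases i <;> simp [oneSubLamExponent] <;> linarith)
    (sum_coeff_mul_rpow_eq_zero_of_sum_hFun h ht)
  have h0 : (0 : ℝ) ≠ -a := by linarith
  have h2 : 1 - 2 * a ≠ -a := by linarith
  rw [Finset.sum_filter, Fin.sum_univ_six] at key
  simp only [oneSubLamExponent, Fin.isValue, Matrix.cons_val_zero, h0, ↓reduceIte,
    Matrix.cons_val_one, lamExponent, neg_zero, rpow_zero, neg_neg, one_mul, zero_add,
    Matrix.cons_val, h2, add_zero, neg_sub, Complex.ofReal_mul] at key
  have hu : (((1 - t) ^ a : ℝ) : ℂ) ≠ 0 := by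
    exact_mod_cast (rpow_pos_of_pos (by linarith [ht.2]) _).ne'
  exact mul_right_cancel₀ hu (by linear_combination key)

theorem coeff_zero_two_eq_zero {a : ℝ} (ha : 2 * a ≠ 1) {c : Fin 6 → ℂ}
    (h : ∀ x ∈ Ioo (0 : ℝ) 1, ∀ y ∈ Ioo (0 : ℝ) 1, ∑ i, c i * (hFun a i x y : ℂ) = 0)
    (h1 : c 1 = 0) (h3 : c 3 = 0) (h4 : c 4 = 0) (h5 : c 5 = 0) :
    c 0 = 0 ∧ c 2 = 0 := by
  refine eq_zero_of_forall_add_mul_rpow_eq_zero (e := 2 * a - 1) (sub_ne_zero.2 ha)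
    fun t ht => ?_
  have ht' : t / (1 + t) ∈ Ioo (0 : ℝ) 1 :=
    ⟨by have := ht.1; positivity, by rw [div_lt_one (by linarith [ht.1])]; linarith⟩
  have key := h (t / (1 + t)) ht' (1 / 2) ⟨by norm_num, by norm_num⟩
  rw [Fin.sum_univ_six, h1, h3, h4, h5] at key
  simp only [Fin.isValue, hFun, lamExponent, Matrix.cons_val_zero, rpow_zero, oneSubLamExponent,
    mul_one, one_div, neg_zero, Complex.ofReal_one, Matrix.cons_val_one, one_mul, neg_neg,
    Complex.ofReal_mul, zero_mul, add_zero, Matrix.cons_val, neg_sub] at key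
  have hx : (t / (1 + t)) ^ (2 * a - 1) * (1 - t / (1 + t)) ^ (1 - 2 * a) = t ^ (2 * a - 1) := by
    rw [show 1 - 2 * a = -(2 * a - 1) by ring]
    exact rpow_div_one_add_mul_one_sub_rpow_neg ht.1 _
  have hy : (2⁻¹ : ℝ) ^ (1 - 2 * a) * (1 - 2⁻¹) ^ (2 * a - 1) = 1 := by
    rw [show (1 : ℝ) - 2⁻¹ = 2⁻¹ by norm_num, ← rpow_add (by norm_num)]
    simp
  rwa [← Complex.ofReal_mul, hx, ← Complex.ofReal_mul, hy, Complex.ofReal_one, mul_one] at key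

theorem eq_zero_of_sum_hFun_eq_zero {a : ℝ} (ha0 : 0 < a) (ha1 : a < 1) (ha : 2 * a ≠ 1)
    {c : Fin 6 → ℂ}
    (h : ∀ x ∈ Ioo (0 : ℝ) 1, ∀ y ∈ Ioo (0 : ℝ) 1, ∑ i, c i * (hFun a i x y : ℂ) = 0) :
    c = 0 := by
  obtain ⟨h3, h4⟩ := coeff_three_four_eq_zero ha0 ha1 ha h
  obtain ⟨h1, h5⟩ := coeff_one_five_eq_zero ha0 ha1 ha h
  obtain ⟨h0, h2⟩ := coeff_zero_two_eq_zero ha h h1 h3 h4 h5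
  ext i
  fin_cases i <;> assumption

/-- Let `N, A ∈ ℤ` with `0 < A < N` and `2A ≠ N`.  The six
functions on the open square `(0,1)²` (real powers with the indicated rational
exponents)
`h₁ = 1`,
`h₂ = (1−λ₁)^{−A/N}(1−λ₂)^{A/N}`,
`h₃ = λ₁^{(2A−N)/N}(1−λ₁)^{(N−2A)/N} λ₂^{(N−2A)/N}(1−λ₂)^{(2A−N)/N}`,
`h₄ = λ₁^{(A−N)/N}(1−λ₁)^{(N−2A)/N} λ₂^{(N−A)/N}(1−λ₂)^{(2A−N)/N}`,
`h₅ = λ₁^{(A−N)/N} λ₂^{(N−A)/N}`,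
`h₆ = λ₁^{(2A−N)/N}(1−λ₁)^{−A/N} λ₂^{(N−2A)/N}(1−λ₂)^{A/N}`
are linearly independent over `ℂ`. -/
theorem stmt11 (N A : ℤ) (hA0 : 0 < A) (hAN : A < N) (h2A : 2 * A ≠ N)
    (c₁ c₂ c₃ c₄ c₅ c₆ : ℂ)
    (h : ∀ l₁ l₂ : ℝ, l₁ ∈ Set.Ioo (0 : ℝ) 1 → l₂ ∈ Set.Ioo (0 : ℝ) 1 →
      c₁ * (1 : ℂ)
        + c₂ * (((1 - l₁) ^ (-(A : ℝ) / N) * (1 - l₂) ^ ((A : ℝ) / N) : ℝ) : ℂ)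
        + c₃ * ((l₁ ^ ((2 * (A : ℝ) - N) / N) * (1 - l₁) ^ (((N : ℝ) - 2 * A) / N) *
            (l₂ ^ (((N : ℝ) - 2 * A) / N) * (1 - l₂) ^ ((2 * (A : ℝ) - N) / N)) : ℝ) : ℂ)
        + c₄ * (((l₁ ^ (((A : ℝ) - N) / N) * (1 - l₁) ^ (((N : ℝ) - 2 * A) / N) *
            (l₂ ^ (((N : ℝ) - A) / N) * (1 - l₂) ^ ((2 * (A : ℝ) - N) / N)) : ℝ)) : ℂ)
        + c₅ * ((l₁ ^ (((A : ℝ) - N) / N) * l₂ ^ (((N : ℝ) - A) / N) : ℝ) : ℂ)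
        + c₆ * (((l₁ ^ ((2 * (A : ℝ) - N) / N) * (1 - l₁) ^ (-(A : ℝ) / N) *
            (l₂ ^ (((N : ℝ) - 2 * A) / N) * (1 - l₂) ^ ((A : ℝ) / N)) : ℝ)) : ℂ) = 0) :
    c₁ = 0 ∧ c₂ = 0 ∧ c₃ = 0 ∧ c₄ = 0 ∧ c₅ = 0 ∧ c₆ = 0 := by
  have hN : (0 : ℝ) < N := by exact_mod_cast hA0.trans hAN
  have ha0 : 0 < (A : ℝ) / N := div_pos (by exact_mod_cast hA0) hN
  have ha1 : (A : ℝ) / N < 1 := (div_lt_one hN).2 (by exact_mod_cast hAN)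
  have ha : 2 * ((A : ℝ) / N) ≠ 1 := by
    rw [mul_div_assoc', Ne, div_eq_one_iff_eq hN.ne']; exact_mod_cast h2A
  have e₁ : (2 * (A : ℝ) - N) / N = 2 * (A / N) - 1 := by field_simp
  have e₂ : ((N : ℝ) - 2 * A) / N = 1 - 2 * (A / N) := by field_simp
  have e₃ : ((A : ℝ) - N) / N = A / N - 1 := by field_simp
  have e₄ : ((N : ℝ) - A) / N = 1 - A / N := by field_simp
  simp only [e₁, e₂, e₃, e₄, neg_div] at h
  have key := eq_zero_of_sum_hFun_eq_zero ha0 ha1 ha (c := ![c₁, c₂, c₃, c₄, c₅, c₆])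
    fun x hx y hy => by
      have hxy := h x y hx hy
      simp only [hFun, lamExponent, oneSubLamExponent, Complex.ofReal_mul, Fin.sum_univ_six,
        Fin.isValue, Matrix.cons_val_zero, rpow_zero, Complex.ofReal_one, mul_one, neg_zero,
        Matrix.cons_val_one, one_mul, neg_neg, Matrix.cons_val, neg_sub]
      push_cast at hxy
      linear_combination hxy
  simpa [funext_iff, Fin.forall_fin_succ] using key
end
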